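/- (Special chain rule) Let g ∈ K{{x}} with ord_x(g) ≥ 1 and suppose g' = 1 + g, where g' = (d/dx)(g). Then for every f ∈ K{{x}}, (d/dx)(f(g(x))) = f'(g(x)) + ((x d/dx)(f))(g(x)) = (((1+x) d/dx)(f))(g(x)), where f(g(x)) = φ_g(f) denotes substitution of g for x in f. -/

import Mathlib

namespace Planar

inductive PVar : Type
  | vx : PVar
  | vy : PVar
deriving DecidableEq

/-- A finite planar reduced rooted tree: every internal vertex has at least two
(ordered) children, encoded as `node t₁ t₂ rest` with children list `t₁ :: t₂ :: rest`;
leaves are labeled by a variable (an isomorphism class of such a labeled tree is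
faithfully represented by this inductive data). -/
inductive PTree : Type
  | leaf : PVar → PTree
  | node : PTree → PTree → List PTree → PTree

namespace PTree

/-- The number of leaves carrying the label `v`. -/
def countLeaf (v : PVar) : PTree → ℕ
  | .leaf w => if w = v then 1 else 0
  | .node t1 t2 rest =>
      countLeaf v t1 + countLeaf v t2 + (rest.attach.map fun t => countLeaf v t.1).sum
decreasing_by
  all_goals simp_wf
  · omega
  · omega
  · have := List.sizeOf_lt_of_mem t.2
    omega

end PTree

/-- `P'(x,y)`: planar monomials plus the empty tree `1_P` (= `none`). -/
abbrev PT := Option PTree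

/-- `deg_x`: the number of leaves labeled `x`. -/
def degx (S : PT) : ℕ := S.elim 0 (PTree.countLeaf .vx)

/-- `deg_y`: the number of leaves labeled `y`. -/
def degy (S : PT) : ℕ := S.elim 0 (PTree.countLeaf .vy)

/-- `m`-ary grafting `•_m` on `P'(x,y)` (`m = l.length`): join the non-trivial entries
at a new root; the conventions `•_m(1_P,…,1_P) = 1_P`, dropping of `1_P`-entries and
`•_2(S,1_P) = •_2(1_P,S) = S` amount to discarding the `1_P`-entries first. -/
def graft (l : List PT) : PT :=
  match l.reduceOption with
  | [] => none
  | [t] => some t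
  | t1 :: t2 :: ts => some (.node t1 t2 ts)

variable (K : Type) [Field K]

/-- The algebra `K{{x,y}` of planar power series in `x` and polynomials in `y`:
functions on `P'(x,y)` such that for every `n` only finitely many monomials of
`x`-degree `n` have a nonzero coefficient. -/
def PSer : Type := {f : PT → K // ∀ n : ℕ, {S : PT | f S ≠ 0 ∧ degx S = n}.Finite}

variable {K}

namespace PSer

private lemma finite_add (f g : PSer K) (n : ℕ) :
    {S : PT | f.1 S + g.1 S ≠ 0 ∧ degx S = n}.Finite := by
  apply ((f.2 n).union (g.2 n)).subset
  rintro S ⟨hne, hdeg⟩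
  by_cases h1 : f.1 S = 0
  · exact Or.inr ⟨by simpa [h1] using hne, hdeg⟩
  · exact Or.inl ⟨h1, hdeg⟩

private lemma finite_neg (f : PSer K) (n : ℕ) :
    {S : PT | -f.1 S ≠ 0 ∧ degx S = n}.Finite := by
  apply (f.2 n).subset
  rintro S ⟨hne, hdeg⟩
  exact ⟨by simpa using hne, hdeg⟩

private lemma finite_zero (n : ℕ) :
    {S : PT | (0 : K) ≠ 0 ∧ degx S = n}.Finite := by
  convert Set.finite_empty using 1
  ext S; simp

private lemma finite_smul (a : K) (f : PSer K) (n : ℕ) :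
    {S : PT | a * f.1 S ≠ 0 ∧ degx S = n}.Finite := by
  apply (f.2 n).subset
  rintro S ⟨hne, hdeg⟩
  exact ⟨fun h => hne (by simp [h]), hdeg⟩

noncomputable instance : AddCommGroup (PSer K) where
  add f g := ⟨fun S => f.1 S + g.1 S, finite_add f g⟩
  zero := ⟨fun _ => 0, finite_zero⟩
  neg f := ⟨fun S => -f.1 S, finite_neg f⟩
  add_assoc f g h := Subtype.ext (funext fun S => add_assoc _ _ _)
  add_comm f g := Subtype.ext (funext fun S => add_comm _ _)
  zero_add f := Subtype.ext (funext fun S => zero_add _)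
  add_zero f := Subtype.ext (funext fun S => add_zero _)
  neg_add_cancel f := Subtype.ext (funext fun S => neg_add_cancel _)
  nsmul n f := ⟨fun S => (n : K) * f.1 S, finite_smul _ f⟩
  nsmul_zero f := Subtype.ext (funext fun S => by
    show ((0 : ℕ) : K) * f.1 S = (0 : K); simp)
  nsmul_succ n f := Subtype.ext (funext fun S => by
    show ((n + 1 : ℕ) : K) * f.1 S = (n : K) * f.1 S + f.1 S; push_cast; ring)
  zsmul n f := ⟨fun S => (n : K) * f.1 S, finite_smul _ f⟩
  zsmul_zero' f := Subtype.ext (funext fun S => by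
    show ((0 : ℤ) : K) * f.1 S = (0 : K); simp)
  zsmul_succ' n f := Subtype.ext (funext fun S => by
    show ((Int.ofNat n.succ : ℤ) : K) * f.1 S = ((Int.ofNat n : ℤ) : K) * f.1 S + f.1 S
    simp only [Int.ofNat_eq_coe]; push_cast; ring)
  zsmul_neg' n f := Subtype.ext (funext fun S => by
    show ((Int.negSucc n : ℤ) : K) * f.1 S = -(((n.succ : ℤ) : K) * f.1 S)
    simp [Int.negSucc_eq]; push_cast; ring)

noncomputable instance : Module K (PSer K) where
  smul a f := ⟨fun S => a * f.1 S, finite_smul a f⟩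
  one_smul f := Subtype.ext (funext fun S => one_mul _)
  mul_smul a b f := Subtype.ext (funext fun S => mul_assoc _ _ _)
  smul_zero a := Subtype.ext (funext fun S => mul_zero _)
  smul_add a f g := Subtype.ext (funext fun S => mul_add _ _ _)
  add_smul a b f := Subtype.ext (funext fun S => add_mul _ _ _)
  zero_smul f := Subtype.ext (funext fun S => zero_mul _)

@[simp] lemma add_coeff (f g : PSer K) (S : PT) : (f + g).1 S = f.1 S + g.1 S := rfl
@[simp] lemma smul_coeff (a : K) (f : PSer K) (S : PT) : (a • f).1 S = a * f.1 S := rfl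
@[simp] lemma zero_coeff (S : PT) : (0 : PSer K).1 S = 0 := rfl

end PSer

open PSer

/-- The indicator series of a single planar monomial `S ∈ P'(x,y)`. -/
noncomputable def mono (S : PT) : PSer K := by
  classical
  refine ⟨fun T => if T = S then 1 else 0, fun n => (Set.finite_singleton S).subset ?_⟩
  rintro T ⟨h1, -⟩
  by_contra hc
  exact h1 (if_neg (by simpa [Set.mem_singleton_iff] using hc))

/-- The unit series `1_P` (the empty tree). -/
noncomputable def onePS : PSer K := mono none

/-- The series `x` (the one-vertex tree labeled `x`). -/
noncomputable def Xps : PSer K := mono (some (.leaf .vx))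

/-- The series `y = dx` (the one-vertex tree labeled `y`). -/
noncomputable def Yps : PSer K := mono (some (.leaf .vy))

/-- Coefficient of the product `•_m(f₁,…,f_m)` at `S`: the (finite) sum of
`c_{S₁}(f₁)⋯c_{S_m}(f_m)` over all decompositions `S = •_m(S₁,…,S_m)`. -/
noncomputable def bulletCoeff (fs : List (PSer K)) (S : PT) : K :=
  ∑ᶠ t ∈ {t : List PT | t.length = fs.length ∧ graft t = S},
    (List.zipWith (fun f u => f.1 u) fs t).prod

open Classical in
/-- The `m`-ary product `•_m(f₁,…,f_m)` on `K{{x,y}` (`m = fs.length`). -/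
noncomputable def bullet (fs : List (PSer K)) : PSer K :=
  if h : ∀ n : ℕ, {S : PT | bulletCoeff fs S ≠ 0 ∧ degx S = n}.Finite
  then ⟨bulletCoeff fs, h⟩ else 0

/-- The `x`-order `ord_x(f) ∈ ℕ ∪ {∞}`: the least `x`-degree of a monomial with
nonzero coefficient (`∞` for `f = 0`). -/
noncomputable def ordx (f : PSer K) : ℕ∞ :=
  ⨅ S ∈ {S : PT | f.1 S ≠ 0}, (degx S : ℕ∞)

/-- The `x`-adic absolute value `|f|ₓ = (1/2)^{ord_x f}` (`= 0` for `f = 0`). -/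
noncomputable def normx (f : PSer K) : ℝ :=
  if ordx f = ⊤ then 0 else (2⁻¹ : ℝ) ^ (ordx f).toNat

/-- The `x`-adic distance `|f - g|ₓ`. -/
noncomputable def distx (f g : PSer K) : ℝ := normx (f - g)

/-- A Cauchy sequence for the `x`-adic distance. -/
def IsCauchySeq (u : ℕ → PSer K) : Prop :=
  ∀ ε : ℝ, 0 < ε → ∃ N : ℕ, ∀ p q : ℕ, N ≤ p → N ≤ q → distx (u p) (u q) < ε

/-- Convergence of a sequence to `f` for the `x`-adic distance. -/
def TendstoSeq (u : ℕ → PSer K) (f : PSer K) : Prop :=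
  ∀ ε : ℝ, 0 < ε → ∃ N : ℕ, ∀ p : ℕ, N ≤ p → distx (u p) f < ε

/-- Continuity of a map between two spaces equipped with distance functions. -/
def ContWrt {α β : Type*} (dα : α → α → ℝ) (dβ : β → β → ℝ) (φ : α → β) : Prop :=
  ∀ a : α, ∀ ε : ℝ, 0 < ε → ∃ δ : ℝ, 0 < δ ∧ ∀ b : α, dα b a < δ → dβ (φ b) (φ a) < ε

/-- The property of being supported on monomials all of whose leaves are labeled `x`. -/
def OnlyX (f : PSer K) : Prop := ∀ S : PT, f.1 S ≠ 0 → degy S = 0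

variable (K) in
/-- `K{{x}}`, the closed unital subalgebra of `K{{x,y}` generated by `x`, as a
submodule: the series supported on `1_P` and trees all of whose leaves are labeled `x`. -/
noncomputable def kxSub : Submodule K (PSer K) where
  carrier := {f | OnlyX f}
  add_mem' := by
    intro f g hf hg S hS
    by_cases h1 : f.1 S = 0
    · exact hg S (by simpa [h1] using hS)
    · exact hf S h1
  zero_mem' := by intro S hS; simp at hS
  smul_mem' := by
    intro a f hf S hS
    exact hf S (fun h => hS (by simp [h]))

variable (K) in
/-- The space `K{{x}}` of planar power series in `x`. -/
abbrev Kx : Type _ := ↥(kxSub K)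

@[simp] lemma mem_kxSub {f : PSer K} : f ∈ kxSub K ↔ OnlyX f := Iff.rfl

/-- The `x`-adic distance on `K{{x}}`. -/
noncomputable def distKx (f g : Kx K) : ℝ := distx f.1 g.1

lemma onePS_mem_kxSub : onePS ∈ kxSub (K := K) := by
  intro S hS
  by_cases h : S = none
  · subst h; rfl
  · exact absurd (if_neg h) hS

lemma Xps_mem_kxSub : Xps ∈ kxSub (K := K) := by
  intro S hS
  by_cases h : S = some (.leaf .vx)
  · subst h; simp [degy, PTree.countLeaf]
  · exact absurd (if_neg h) hS

/-- `1_P` as an element of `K{{x}}`. -/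
noncomputable def oneX : Kx K := ⟨onePS, onePS_mem_kxSub⟩

/-- `x` as an element of `K{{x}}`. -/
noncomputable def xX : Kx K := ⟨Xps, Xps_mem_kxSub⟩

open Classical in
/-- The `m`-ary product `•_m` on `K{{x}}` (`m = fs.length`). -/
noncomputable def bulletX (fs : List (Kx K)) : Kx K :=
  if h : bullet (fs.map (fun f => f.1)) ∈ kxSub K
  then ⟨bullet (fs.map (fun f => f.1)), h⟩ else 0

open Classical in
/-- The homogeneous component of degree `n` (w.r.t. `deg_x`) of a planar power series. -/
noncomputable def comp (f : PSer K) (n : ℕ) : PSer K :=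
  ⟨fun S => if degx S = n then f.1 S else 0, by
    intro m
    apply (f.2 m).subset
    rintro S ⟨h1, h2⟩
    refine ⟨?_, h2⟩
    by_cases hd : degx S = n
    · simpa [hd] using h1
    · simp [hd] at h1⟩

/-- The homogeneous component of degree `n` of an element of `K{{x}}`. -/
noncomputable def compX (f : Kx K) (n : ℕ) : Kx K :=
  ⟨comp f.1 n, by
    intro S hS
    apply (mem_kxSub.mp f.2) S
    simp only [comp] at hS
    by_cases hd : degx S = n
    · simpa [hd] using hS
    · simp [hd] at hS⟩

/-- A substitution homomorphism `φ_{(g,h)} : K{{x,y} → K{{x,y}`: `K`-linear, compatible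
with all grafting operations `•_m` (`m ≥ 2`), unital, `x ↦ g`, `y ↦ h`, and continuous
for the `x`-adic topology. -/
structure IsSubstHom (g h : PSer K) (φ : PSer K → PSer K) : Prop where
  linear : IsLinearMap K φ
  map_graft : ∀ fs : List (PSer K), 2 ≤ fs.length → φ (bullet fs) = bullet (fs.map φ)
  map_one : φ onePS = onePS
  map_X : φ Xps = g
  map_Y : φ Yps = h
  cont : ContWrt distx distx φ

/-- A substitution homomorphism `φ_g : K{{x}} → K{{x}}` with `x ↦ g`. -/
structure IsSubstHomX (g : Kx K) (φ : Kx K → Kx K) : Prop where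
  linear : IsLinearMap K φ
  map_graft : ∀ fs : List (Kx K), 2 ≤ fs.length → φ (bulletX fs) = bulletX (fs.map φ)
  map_one : φ oneX = oneX
  map_X : φ xX = g
  cont : ContWrt distKx distKx φ

/-- The universal derivation `d : K{{x}} → K{{x,y}`: continuous, `K`-linear, `d x = y`,
and satisfying the Leibniz rule for every grafting operation `•_m` (`m ≥ 2`). -/
structure IsUDeriv (d : Kx K → PSer K) : Prop where
  linear : IsLinearMap K d
  cont : ContWrt distKx distx d
  map_X : d xX = Yps
  leibniz : ∀ fs : List (Kx K), 2 ≤ fs.length →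
    d (bulletX fs) = ∑ i : Fin fs.length,
      bullet ((fs.map (fun f => f.1)).set i.1 (d (fs.get i)))

/-- The `k`-ary planar exponential series `Exp_k(x)`: constant coefficient `1`,
coefficient `1` at `x`, and `Exp_k(kx) = •_k(Exp_k(x),…,Exp_k(x))`. -/
structure IsExp (k : ℕ) (f : Kx K) : Prop where
  coeff_one : f.1.1 none = 1
  coeff_X : f.1.1 (some (.leaf .vx)) = 1
  funEq : ∀ φ : Kx K → Kx K, IsSubstHomX ((k : K) • xX) φ →
    φ f = bulletX (List.replicate k f)

/-- `ℓ = Log_k(1+x)`, the planar logarithm attached to a planar exponential series `e`: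
`ord_x ℓ ≥ 1` and `ℓ(e - 1) = x`. -/
structure IsLogOf (e ℓ : Kx K) : Prop where
  ord : 1 ≤ ordx ℓ.1
  eq : ∀ φ : Kx K → Kx K, IsSubstHomX (e - oneX) φ → φ ℓ = xX

end Planar

/-!
Call a continuous `K`-linear map `A : K{{x}} → K{{x,y}` a derivation along `σ` if
`A(•_m(f₁,…,f_m)) = Σᵢ •_m(σ f₁,…,A fᵢ,…,σ f_m)`. When `σ 1 = 1` such an `A` is determined
by `A x`: the Leibniz rule on `1 = •₂(1,1)` forces `A 1 = 0`, on `•_m` of monomials it gives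
every monomial by induction on trees, and finite sums of monomials are `x`-adically dense.

A substitution fixing `x` fixes all of `K{{x}}`, so every `φ_{(x,h)} ∘ d` is a derivation along
the inclusion; comparing values at `x` gives `(1+x) d/dx = d/dx + x d/dx`. Both
`d/dx ∘ φ_g` and `φ_g ∘ ((1+x) d/dx)` are derivations along `φ_g`, and at `x` they take the
values `g' = 1 + g` and `φ_g(1 + x) = 1 + g`.
-/

namespace Planar

variable {K : Type} [Field K]

@[elab_as_elim]
theorem PTree.induction {P : PTree → Prop} (leaf : ∀ v, P (.leaf v))
    (node : ∀ t₁ t₂ ts, P t₁ → P t₂ → (∀ t ∈ ts, P t) → P (.node t₁ t₂ ts)) (t : PTree) : P t :=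
  match t with
  | .leaf v => leaf v
  | .node t₁ t₂ ts => node t₁ t₂ ts (PTree.induction leaf node t₁)
      (PTree.induction leaf node t₂) fun t _ => PTree.induction leaf node t
decreasing_by
  all_goals simp_wf
  · omega
  · omega
  · have := List.sizeOf_lt_of_mem ‹t ∈ ts›
    omega

lemma PTree.countLeaf_leaf (v w : PVar) :
    PTree.countLeaf v (.leaf w) = if w = v then 1 else 0 := by
  rw [PTree.countLeaf]

lemma PTree.countLeaf_node (v : PVar) (t₁ t₂ : PTree) (ts : List PTree) :
    PTree.countLeaf v (.node t₁ t₂ ts) =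
      PTree.countLeaf v t₁ + PTree.countLeaf v t₂ + (ts.map (PTree.countLeaf v)).sum := by
  rw [PTree.countLeaf]
  simp

lemma PTree.countLeaf_node_eq_zero {v : PVar} {t₁ t₂ : PTree} {ts : List PTree} :
    PTree.countLeaf v (.node t₁ t₂ ts) = 0 ↔ ∀ t ∈ t₁ :: t₂ :: ts, PTree.countLeaf v t = 0 := by
  simp [PTree.countLeaf_node, List.sum_eq_zero_iff, and_assoc]

lemma elim_countLeaf_graft (v : PVar) (l : List PT) :
    (graft l).elim 0 (PTree.countLeaf v) = (l.map fun S => S.elim 0 (PTree.countLeaf v)).sum := by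
  have hreduce : (l.map fun S => S.elim 0 (PTree.countLeaf v)).sum
      = (l.reduceOption.map (PTree.countLeaf v)).sum := by
    induction l with
    | nil => rfl
    | cons S l ih => cases S <;> simp [ih, List.reduceOption_cons_of_some]
  rw [hreduce, graft]
  split <;> simp_all [PTree.countLeaf_node, Nat.add_assoc]

lemma degx_graft (l : List PT) : degx (graft l) = (l.map degx).sum := elim_countLeaf_graft .vx l

lemma degy_graft (l : List PT) : degy (graft l) = (l.map degy).sum := elim_countLeaf_graft .vy l

lemma graft_map_some (t₁ t₂ : PTree) (ts : List PTree) :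
    graft ((t₁ :: t₂ :: ts).map some) = some (.node t₁ t₂ ts) := by
  have : ((t₁ :: t₂ :: ts).map some).reduceOption = t₁ :: t₂ :: ts := by
    induction ts <;> simp_all [List.reduceOption_cons_of_some]
  rw [graft, this]

lemma graft_pair_none_right (S : PT) : graft [S, none] = S := by
  cases S <;> rfl

lemma graft_pair_none_left (S : PT) : graft [none, S] = S := by
  cases S <;> rfl

lemma finite_setOf_length_eq_forall_mem {α : Type*} {E : Set α} (hE : E.Finite) (m : ℕ) :
    {l : List α | l.length = m ∧ ∀ a ∈ l, a ∈ E}.Finite := by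
  have := hE.to_subtype
  refine ((List.finite_length_eq E m).image (List.map Subtype.val)).subset ?_
  rintro l ⟨hlen, hmem⟩
  lift l to List E using hmem
  exact ⟨l, by simpa using hlen, rfl⟩

open Classical in
@[simp] lemma mono_apply (S T : PT) : (mono (K := K) S).1 T = if T = S then 1 else 0 := rfl

lemma exists_coeff_ne_zero_of_prod_ne_zero {fs : List (PSer K)} {t : List PT}
    (hlen : t.length = fs.length) (h : (List.zipWith (fun f u => f.1 u) fs t).prod ≠ 0)
    {u : PT} (hu : u ∈ t) : ∃ f ∈ fs, f.1 u ≠ 0 := by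
  obtain ⟨i, hi, rfl⟩ := List.mem_iff_getElem.mp hu
  refine ⟨fs[i], List.getElem_mem _, fun h0 => h (List.prod_eq_zero ?_)⟩
  exact List.mem_iff_getElem.mpr ⟨i, by simp [hi, ← hlen], List.getElem_zipWith.trans h0⟩

lemma finite_decompositions (fs : List (PSer K)) (n : ℕ) :
    {t : List PT | t.length = fs.length ∧ (t.map degx).sum = n ∧
      (List.zipWith (fun f u => f.1 u) fs t).prod ≠ 0}.Finite := by
  set E : Set PT := ⋃ f ∈ {f | f ∈ fs}, ⋃ d ∈ Set.Iic n, {S | f.1 S ≠ 0 ∧ degx S = d}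
  have hE : E.Finite :=
    fs.finite_toSet.biUnion fun f _ => (Set.finite_Iic n).biUnion fun d _ => f.2 d
  refine (finite_setOf_length_eq_forall_mem hE fs.length).subset ?_
  rintro t ⟨hlen, hdeg, hprod⟩
  refine ⟨hlen, fun u hu => ?_⟩
  obtain ⟨f, hf, hfu⟩ := exists_coeff_ne_zero_of_prod_ne_zero hlen hprod hu
  have hle : degx u ≤ n := hdeg ▸ List.le_sum_of_mem (List.mem_map_of_mem hu)
  exact Set.mem_biUnion hf (Set.mem_biUnion (Set.mem_Iic.mpr hle) ⟨hfu, rfl⟩)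

lemma exists_decomposition_of_bulletCoeff_ne_zero {fs : List (PSer K)} {S : PT}
    (h : bulletCoeff fs S ≠ 0) : ∃ t : List PT, t.length = fs.length ∧ graft t = S ∧
      (List.zipWith (fun f u => f.1 u) fs t).prod ≠ 0 := by
  obtain ⟨t, ⟨hlen, hgraft⟩, hprod⟩ := exists_ne_zero_of_finsum_mem_ne_zero h
  exact ⟨t, hlen, hgraft, hprod⟩

lemma bullet_apply (fs : List (PSer K)) (S : PT) : (bullet fs).1 S = bulletCoeff fs S := by
  have hfin : ∀ n : ℕ, {S : PT | bulletCoeff fs S ≠ 0 ∧ degx S = n}.Finite := by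
    intro n
    refine ((finite_decompositions fs n).image graft).subset ?_
    rintro S ⟨hS, rfl⟩
    obtain ⟨t, hlen, rfl, hprod⟩ := exists_decomposition_of_bulletCoeff_ne_zero hS
    exact ⟨t, ⟨hlen, (degx_graft t).symm, hprod⟩, rfl⟩
  have hbullet : bullet fs = (⟨bulletCoeff fs, hfin⟩ : PSer K) := dif_pos hfin
  rw [hbullet]

open Classical in
lemma finsum_mem_eq_single {α M : Type*} [AddCommMonoid M] {s : Set α} {f : α → M} (a : α)
    (h : ∀ x ∈ s, x ≠ a → f x = 0) : ∑ᶠ x ∈ s, f x = if a ∈ s then f a else 0 := by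
  rw [finsum_mem_def, finsum_eq_single _ a fun x hx => ?_]
  · simp [Set.indicator_apply]
  · by_cases hxs : x ∈ s <;> simp [hxs, h x _ hx]

open Classical in
lemma prod_zipWith_map_mono (Ss t : List PT) (hlen : Ss.length = t.length) :
    (List.zipWith (fun f u => f.1 u) (Ss.map (mono (K := K))) t).prod
      = if t = Ss then 1 else 0 := by
  induction Ss generalizing t with
  | nil => simp_all [eq_comm]
  | cons S Ss ih =>
    obtain _ | ⟨u, t⟩ := t
    · simp at hlen
    · rw [List.map_cons, List.zipWith_cons_cons, List.prod_cons, ih t (by simpa using hlen)]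
      by_cases hu : u = S <;> by_cases ht : t = Ss <;> simp [hu, ht]

open Classical in
lemma bullet_map_mono (Ss : List PT) : bullet (Ss.map (mono (K := K))) = mono (graft Ss) := by
  apply Subtype.ext
  funext S
  rw [bullet_apply, mono_apply, bulletCoeff, finsum_mem_eq_single Ss fun t ht hne => by
    rw [prod_zipWith_map_mono _ _ (by simpa using ht.1.symm), if_neg hne]]
  simp [prod_zipWith_map_mono Ss Ss rfl, eq_comm]

lemma bullet_onePS_right (a : PSer K) : bullet [a, onePS] = a := by
  apply Subtype.ext
  funext S
  rw [bullet_apply, bulletCoeff, finsum_mem_eq_single [S, none] ?_]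
  · simp [graft_pair_none_right, onePS]
  · rintro t ⟨hlen, hgraft⟩ hne
    obtain ⟨u, w, rfl⟩ := List.length_eq_two.mp hlen
    obtain rfl | hw := eq_or_ne w none
    · exact absurd (by rw [← hgraft, graft_pair_none_right]) hne
    · simp [onePS, hw]

lemma bullet_onePS_left (a : PSer K) : bullet [onePS, a] = a := by
  apply Subtype.ext
  funext S
  rw [bullet_apply, bulletCoeff, finsum_mem_eq_single [none, S] ?_]
  · simp [graft_pair_none_left, onePS]
  · rintro t ⟨hlen, hgraft⟩ hne
    obtain ⟨u, w, rfl⟩ := List.length_eq_two.mp hlen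
    obtain rfl | hu := eq_or_ne u none
    · exact absurd (by rw [← hgraft, graft_pair_none_left]) hne
    · simp [onePS, hu]

lemma zipWith_set_left {α β γ : Type*} (c : α → β → γ) (l : List α) (t : List β) (i : ℕ)
    (a : α) (hi : i < t.length) :
    List.zipWith c (l.set i a) t = (List.zipWith c l t).set i (c a t[i]) := by
  refine List.ext_getElem (by simp) fun n h₁ h₂ => ?_
  simp only [List.getElem_zipWith, List.getElem_set]
  split_ifs <;> simp_all

lemma prod_set_add {R : Type*} [CommSemiring R] (L : List R) {i : ℕ} (hi : i < L.length)
    (a b : R) : (L.set i (a + b)).prod = (L.set i a).prod + (L.set i b).prod := by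
  simp only [List.prod_set, if_pos hi]
  ring

lemma bullet_set_add (l : List (PSer K)) {i : ℕ} (hi : i < l.length) (a b : PSer K) :
    bullet (l.set i (a + b)) = bullet (l.set i a) + bullet (l.set i b) := by
  apply Subtype.ext
  funext S
  rw [PSer.add_coeff, bullet_apply, bullet_apply, bullet_apply]
  simp only [bulletCoeff, List.length_set]
  set A := {t : List PT | t.length = l.length ∧ graft t = S}
  have hterm : ∀ t ∈ A, (List.zipWith (fun f u => f.1 u) (l.set i (a + b)) t).prod
      = (List.zipWith (fun f u => f.1 u) (l.set i a) t).prod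
        + (List.zipWith (fun f u => f.1 u) (l.set i b) t).prod := by
    rintro t ⟨hlen, -⟩
    simp only [zipWith_set_left _ _ _ _ _ (hlen ▸ hi)]
    exact prod_set_add _ (by simpa [hlen]) _ _
  have hfin : ∀ v : PSer K, (A ∩ Function.support fun t =>
      (List.zipWith (fun f u => f.1 u) (l.set i v) t).prod).Finite := fun v =>
    (finite_decompositions (l.set i v) (degx S)).subset fun t ⟨⟨hlen, hgraft⟩, hprod⟩ =>
      ⟨by rw [List.length_set, hlen], by rw [← degx_graft, hgraft], hprod⟩
  rw [finsum_mem_congr rfl hterm, finsum_mem_add_distrib' (hfin a) (hfin b)]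

lemma onlyX_bullet {fs : List (PSer K)} (h : ∀ f ∈ fs, OnlyX f) : OnlyX (bullet fs) := by
  intro S hS
  rw [bullet_apply] at hS
  obtain ⟨t, hlen, rfl, hprod⟩ := exists_decomposition_of_bulletCoeff_ne_zero hS
  rw [degy_graft, List.sum_eq_zero_iff]
  intro n hn
  obtain ⟨u, hu, rfl⟩ := List.mem_map.mp hn
  obtain ⟨f, hf, hfu⟩ := exists_coeff_ne_zero_of_prod_ne_zero hlen hprod hu
  exact h f hf u hfu

lemma coe_bulletX (fs : List (Kx K)) : (bulletX fs).1 = bullet (fs.map (·.1)) := by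
  rw [bulletX, dif_pos]
  exact onlyX_bullet (by simp only [List.mem_map]; rintro _ ⟨f, -, rfl⟩; exact f.2)

lemma mono_mem_kxSub {S : PT} (hS : degy S = 0) : mono S ∈ kxSub K := by
  intro T hT
  by_cases h : T = S
  · rwa [h]
  · exact absurd (if_neg h) hT

lemma bulletX_pair_oneX : bulletX [oneX, oneX] = (oneX : Kx K) :=
  Subtype.ext ((coe_bulletX _).trans (bullet_onePS_left onePS))

noncomputable def monoX (S : PT) : Kx K :=
  if h : degy S = 0 then ⟨mono S, mono_mem_kxSub h⟩ else 0

lemma coe_monoX {S : PT} (h : degy S = 0) : (monoX (K := K) S).1 = mono S := by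
  rw [monoX, dif_pos h]

lemma monoX_of_degy_ne_zero {S : PT} (h : degy S ≠ 0) : monoX (K := K) S = 0 := dif_neg h

lemma monoX_none : monoX (K := K) none = oneX := Subtype.ext (coe_monoX rfl)

lemma monoX_leaf_vx : monoX (K := K) (some (.leaf .vx)) = xX :=
  Subtype.ext (coe_monoX (by simp [degy, PTree.countLeaf_leaf]))

lemma monoX_node {t₁ t₂ : PTree} {ts : List PTree} (h : degy (some (.node t₁ t₂ ts)) = 0) :
    monoX (K := K) (some (.node t₁ t₂ ts)) = bulletX ((t₁ :: t₂ :: ts).map (monoX ∘ some)) := by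
  apply Subtype.ext
  rw [coe_monoX h, coe_bulletX, ← graft_map_some, ← bullet_map_mono, List.map_map, List.map_map]
  refine congrArg bullet (List.map_congr_left fun t ht => ?_)
  exact (coe_monoX (S := some t) (PTree.countLeaf_node_eq_zero.mp h t ht)).symm

-- `hzero` is needed for the junk value `monoX S = 0` at trees with a `y`-leaf.
theorem monoX_induction {P : Kx K → Prop} (hzero : P 0) (hone : P oneX) (hx : P xX)
    (hbullet : ∀ fs : List (Kx K), 2 ≤ fs.length → (∀ f ∈ fs, P f) → P (bulletX fs))
    (S : PT) : P (monoX S) := by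
  obtain _ | t := S
  · rwa [monoX_none]
  induction t using PTree.induction with
  | leaf v =>
    cases v
    · rwa [monoX_leaf_vx]
    · rwa [monoX_of_degy_ne_zero (by simp [degy, PTree.countLeaf_leaf])]
  | node t₁ t₂ ts ih₁ ih₂ ihs =>
    by_cases h : degy (some (.node t₁ t₂ ts)) = 0
    · rw [monoX_node h]
      refine hbullet _ (by simp) ?_
      simpa using ⟨ih₁, ih₂, ihs⟩
    · rwa [monoX_of_degy_ne_zero h]

variable (K) in
noncomputable def coeffLinearMap (S : PT) : PSer K →ₗ[K] K where
  toFun f := f.1 S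
  map_add' _ _ := rfl
  map_smul' _ _ := rfl

lemma sub_coeff (f g : PSer K) (S : PT) : (f - g).1 S = f.1 S - g.1 S :=
  map_sub (coeffLinearMap K S) f g

lemma ordx_le {f : PSer K} {S : PT} (h : f.1 S ≠ 0) : ordx f ≤ degx S := iInf₂_le S h

lemma le_ordx {f : PSer K} {c : ℕ∞} (h : ∀ S : PT, f.1 S ≠ 0 → c ≤ degx S) : c ≤ ordx f :=
  le_iInf₂ h

noncomputable def normOfOrd (o : ℕ∞) : ℝ := if o = ⊤ then 0 else (2⁻¹ : ℝ) ^ o.toNat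

lemma normOfOrd_natCast (n : ℕ) : normOfOrd n = (2⁻¹ : ℝ) ^ n := by
  rw [normOfOrd, if_neg (ENat.natCast_ne_top n), ENat.toNat_natCast]

lemma normx_eq_normOfOrd (f : PSer K) : normx f = normOfOrd (ordx f) := rfl

lemma normOfOrd_antitone : Antitone normOfOrd := by
  intro a b hab
  by_cases hb : b = ⊤
  · rw [normOfOrd, if_pos hb, normOfOrd]
    split_ifs <;> positivity
  · have ha : a ≠ ⊤ := ne_top_of_le_ne_top hb hab
    rw [normOfOrd, normOfOrd, if_neg hb, if_neg ha]
    exact pow_le_pow_of_le_one (by norm_num) (by norm_num) (ENat.toNat_le_toNat hab hb)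

lemma ordx_neg (f : PSer K) : ordx (-f) = ordx f := by
  change ⨅ S ∈ {S : PT | -f.1 S ≠ 0}, (degx S : ℕ∞) = _
  simp only [neg_ne_zero]
  rfl

lemma min_ordx_le_ordx_add (f g : PSer K) : min (ordx f) (ordx g) ≤ ordx (f + g) := by
  refine le_ordx fun S hS => ?_
  rw [PSer.add_coeff] at hS
  by_cases hf : f.1 S = 0
  · exact (min_le_right _ _).trans (ordx_le fun hg => hS (by rw [hf, hg, add_zero]))
  · exact (min_le_left _ _).trans (ordx_le hf)

lemma normx_add_le (f g : PSer K) : normx (f + g) ≤ max (normx f) (normx g) := by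
  simp only [normx_eq_normOfOrd, ← normOfOrd_antitone.map_min]
  exact normOfOrd_antitone (min_ordx_le_ordx_add f g)

lemma normx_sub_le (f g : PSer K) : normx (f - g) ≤ max (normx f) (normx g) := by
  simpa only [← sub_eq_add_neg, normx_eq_normOfOrd, ordx_neg] using normx_add_le f (-g)

lemma normx_le_pow {f : PSer K} {n : ℕ} (h : ∀ S : PT, f.1 S ≠ 0 → n ≤ degx S) :
    normx f ≤ (2⁻¹ : ℝ) ^ n := by
  have hle := normOfOrd_antitone (le_ordx (f := f) (c := n) fun S hS => by exact_mod_cast h S hS)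
  rwa [normOfOrd_natCast] at hle

lemma eq_zero_of_forall_normx_lt {f : PSer K} (h : ∀ ε : ℝ, 0 < ε → normx f < ε) : f = 0 := by
  have hord : ordx f = ⊤ := by
    by_contra hne
    have hpos : 0 < normx f := by rw [normx, if_neg hne]; positivity
    exact lt_irrefl _ (h _ hpos)
  refine Subtype.ext (funext fun S => by_contra fun hS => ?_)
  exact ENat.natCast_ne_top _ (top_le_iff.mp (hord ▸ ordx_le hS))

lemma exists_mem_span_monoX_normx_sub_le (f : Kx K) (N : ℕ) :
    ∃ F ∈ Submodule.span K (Set.range (monoX (K := K))), normx (F.1 - f.1) ≤ (2⁻¹ : ℝ) ^ N := by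
  classical
  have hfin : {S : PT | f.1.1 S ≠ 0 ∧ degx S < N}.Finite :=
    ((Set.finite_Iio N).biUnion fun n _ => f.1.2 n).subset fun S ⟨hS, hdeg⟩ =>
      Set.mem_biUnion (Set.mem_Iio.mpr hdeg) ⟨hS, rfl⟩
  set s := hfin.toFinset
  refine ⟨∑ S ∈ s, f.1.1 S • monoX S,
    Submodule.sum_mem _ fun S _ => Submodule.smul_mem _ _ (Submodule.subset_span ⟨S, rfl⟩),
    normx_le_pow fun T hT => ?_⟩
  have hcoeff : (∑ S ∈ s, f.1.1 S • monoX S).1.1 T = if T ∈ s then f.1.1 T else 0 := by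
    rw [Submodule.coe_sum]
    refine (map_sum (coeffLinearMap K T) _ s).trans ?_
    have hterm : ∀ S ∈ s, coeffLinearMap K T (f.1.1 S • monoX S).1
        = if S = T then f.1.1 T else 0 := by
      intro S hS
      have hSy : degy S = 0 := f.2 S (hfin.mem_toFinset.mp hS).1
      change f.1.1 S * (monoX S).1.1 T = _
      rw [coe_monoX hSy, mono_apply]
      by_cases hST : S = T
      · rw [hST, if_pos rfl, if_pos rfl, mul_one]
      · rw [if_neg (Ne.symm hST), if_neg hST, mul_zero]
    rw [Finset.sum_congr rfl hterm, Finset.sum_ite_eq']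
  rw [sub_coeff, hcoeff] at hT
  split_ifs at hT with hTs
  · exact absurd (sub_self _) hT
  · refine not_lt.mp fun hlt => hTs (hfin.mem_toFinset.mpr ⟨fun h0 => hT ?_, hlt⟩)
    rw [h0, sub_zero]

lemma ContWrt.comp {α β γ : Type*} {dα : α → α → ℝ} {dβ : β → β → ℝ} {dγ : γ → γ → ℝ}
    {χ : β → γ} {φ : α → β} (hχ : ContWrt dβ dγ χ) (hφ : ContWrt dα dβ φ) :
    ContWrt dα dγ (fun a => χ (φ a)) := by
  intro a ε hε
  obtain ⟨δ₁, hδ₁, hχa⟩ := hχ (φ a) ε hε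
  obtain ⟨δ₂, hδ₂, hφa⟩ := hφ a δ₁ hδ₁
  exact ⟨δ₂, hδ₂, fun b hb => hχa (φ b) (hφa b hb)⟩

lemma ContWrt.add {α : Type*} {dα : α → α → ℝ} {φ χ : α → PSer K}
    (hφ : ContWrt dα distx φ) (hχ : ContWrt dα distx χ) :
    ContWrt dα distx (fun a => φ a + χ a) := by
  intro a ε hε
  obtain ⟨δ₁, hδ₁, hφa⟩ := hφ a ε hε
  obtain ⟨δ₂, hδ₂, hχa⟩ := hχ a ε hε
  refine ⟨min δ₁ δ₂, lt_min hδ₁ hδ₂, fun b hb => ?_⟩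
  calc distx (φ b + χ b) (φ a + χ a) = normx ((φ b - φ a) + (χ b - χ a)) := by
        rw [distx]; abel_nf
    _ ≤ max (normx (φ b - φ a)) (normx (χ b - χ a)) := normx_add_le _ _
    _ < ε := max_lt (hφa b (hb.trans_le (min_le_left _ _))) (hχa b (hb.trans_le (min_le_right _ _)))

lemma eq_of_eqOn_monoX {A B : Kx K → PSer K} (hA : IsLinearMap K A) (hB : IsLinearMap K B)
    (hAc : ContWrt distKx distx A) (hBc : ContWrt distKx distx B)
    (h : ∀ S : PT, A (monoX S) = B (monoX S)) : A = B := by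
  funext f
  have hspan : ∀ F ∈ Submodule.span K (Set.range (monoX (K := K))), A F = B F := fun F hF =>
    LinearMap.eqOn_span' (f := hA.mk' A) (g := hB.mk' B) (by rintro _ ⟨S, rfl⟩; exact h S) hF
  refine sub_eq_zero.mp (eq_zero_of_forall_normx_lt fun ε hε => ?_)
  obtain ⟨δA, hδA, hAf⟩ := hAc f ε hε
  obtain ⟨δB, hδB, hBf⟩ := hBc f ε hε
  obtain ⟨N, hN⟩ := exists_pow_lt_of_lt_one (lt_min hδA hδB) (by norm_num : (2⁻¹ : ℝ) < 1)
  obtain ⟨F, hF, hFf⟩ := exists_mem_span_monoX_normx_sub_le f N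
  have hclose : distKx F f < min δA δB := hFf.trans_lt hN
  calc normx (A f - B f) = normx ((B F - B f) - (A F - A f)) := by rw [hspan F hF]; abel_nf
    _ ≤ max (normx (B F - B f)) (normx (A F - A f)) := normx_sub_le _ _
    _ < ε := max_lt (hBf F (hclose.trans_le (min_le_right _ _)))
        (hAf F (hclose.trans_le (min_le_left _ _)))

lemma _root_.IsLinearMap.map_sum {R M N ι : Type*} [Semiring R] [AddCommMonoid M] [Module R M]
    [AddCommMonoid N] [Module R N] {φ : M → N} (hφ : IsLinearMap R φ) (s : Finset ι)
    (f : ι → M) : φ (∑ i ∈ s, f i) = ∑ i ∈ s, φ (f i) :=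
  _root_.map_sum (hφ.mk' φ) f s

lemma IsSubstHom.map_coe {h : PSer K} {ψ : PSer K → PSer K} (hψ : IsSubstHom Xps h ψ)
    (f : Kx K) : ψ f.1 = f.1 := by
  have hlin : IsLinearMap K fun f : Kx K => ψ f.1 :=
    ⟨fun a b => hψ.linear.map_add a.1 b.1, fun c a => hψ.linear.map_smul c a.1⟩
  have hid : IsLinearMap K fun f : Kx K => f.1 := ⟨fun _ _ => rfl, fun _ _ => rfl⟩
  have hcoe : ContWrt distKx distx fun f : Kx K => f.1 := fun _ ε hε => ⟨ε, hε, fun _ hb => hb⟩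
  refine congrFun (eq_of_eqOn_monoX hlin hid (hψ.cont.comp hcoe) hcoe fun S => ?_) f
  refine monoX_induction (P := fun f : Kx K => ψ f.1 = f.1) hψ.linear.map_zero hψ.map_one
    hψ.map_X (fun fs hfs hmem => ?_) S
  rw [coe_bulletX, hψ.map_graft _ (by simpa), List.map_map]
  exact congrArg bullet (List.map_congr_left hmem)

structure IsContDerivAlong (σ A : Kx K → PSer K) : Prop where
  linear : IsLinearMap K A
  cont : ContWrt distKx distx A
  leibniz : ∀ fs : List (Kx K), 2 ≤ fs.length → A (bulletX fs) =
    ∑ i ∈ Finset.range fs.length, bullet ((fs.map σ).set i (A (fs.getD i 0)))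

lemma IsUDeriv.isContDerivAlong {d : Kx K → PSer K} (hd : IsUDeriv d) :
    IsContDerivAlong (·.1) d where
  linear := hd.linear
  cont := hd.cont
  leibniz fs hfs := by
    rw [hd.leibniz fs hfs, Finset.sum_range]
    exact Finset.sum_congr rfl fun i _ => by rw [List.getD_eq_getElem _ _ i.2, List.get_eq_getElem]

namespace IsContDerivAlong

variable {σ A B : Kx K → PSer K}

lemma map_oneX (hA : IsContDerivAlong σ A) (hσ : σ oneX = onePS) : A oneX = 0 := by
  simpa [bulletX_pair_oneX, Finset.sum_range_succ, hσ, bullet_onePS_left, bullet_onePS_right]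
    using hA.leibniz [oneX, oneX] le_rfl

theorem ext (hA : IsContDerivAlong σ A) (hB : IsContDerivAlong σ B) (hσ : σ oneX = onePS)
    (hx : A xX = B xX) : A = B := by
  refine eq_of_eqOn_monoX hA.linear hB.linear hA.cont hB.cont fun S => ?_
  refine monoX_induction (P := fun f => A f = B f) ?_ ?_ hx (fun fs hfs hmem => ?_) S
  · rw [hA.linear.map_zero, hB.linear.map_zero]
  · rw [hA.map_oneX hσ, hB.map_oneX hσ]
  · rw [hA.leibniz fs hfs, hB.leibniz fs hfs]
    refine Finset.sum_congr rfl fun i hi => ?_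
    have hi : i < fs.length := Finset.mem_range.mp hi
    rw [hmem _ (List.getD_eq_getElem fs 0 hi ▸ List.getElem_mem hi)]

lemma add (hA : IsContDerivAlong σ A) (hB : IsContDerivAlong σ B) :
    IsContDerivAlong σ fun f => A f + B f where
  linear := ⟨fun f g => by rw [hA.linear.map_add, hB.linear.map_add]; abel,
    fun c f => by rw [hA.linear.map_smul, hB.linear.map_smul, smul_add]⟩
  cont := hA.cont.add hB.cont
  leibniz fs hfs := by
    rw [hA.leibniz fs hfs, hB.leibniz fs hfs, ← Finset.sum_add_distrib]
    refine Finset.sum_congr rfl fun i hi => (bullet_set_add _ ?_ _ _).symm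
    simpa using Finset.mem_range.mp hi

lemma substHom_comp {g h : PSer K} {ψ : PSer K → PSer K} (hA : IsContDerivAlong σ A)
    (hψ : IsSubstHom g h ψ) : IsContDerivAlong (fun f => ψ (σ f)) (fun f => ψ (A f)) where
  linear := ⟨fun f g => by rw [hA.linear.map_add, hψ.linear.map_add],
    fun c f => by rw [hA.linear.map_smul, hψ.linear.map_smul]⟩
  cont := hψ.cont.comp hA.cont
  leibniz fs hfs := by
    rw [hA.leibniz fs hfs, hψ.linear.map_sum]
    refine Finset.sum_congr rfl fun i _ => ?_
    rw [hψ.map_graft _ (by simpa), List.map_set, List.map_map]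
    rfl

lemma comp_substHomX {g : Kx K} {φ : Kx K → Kx K} (hA : IsContDerivAlong σ A)
    (hφ : IsSubstHomX g φ) : IsContDerivAlong (fun f => σ (φ f)) (fun f => A (φ f)) where
  linear := ⟨fun f g => by rw [hφ.linear.map_add, hA.linear.map_add],
    fun c f => by rw [hφ.linear.map_smul, hA.linear.map_smul]⟩
  cont := hA.cont.comp hφ.cont
  leibniz fs hfs := by
    rw [hφ.map_graft fs hfs, hA.leibniz _ (by simpa), List.length_map, List.map_map]
    refine Finset.sum_congr rfl fun i _ => ?_
    have hget : (fs.map φ).getD i (φ 0) = φ (fs.getD i 0) := List.getD_map ..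
    rw [hφ.linear.map_zero] at hget
    rw [hget]
    rfl

lemma bulletX_leibniz {E : Kx K → Kx K} (hE : IsContDerivAlong (·.1) fun f => (E f).1)
    (fs : List (Kx K)) (hfs : 2 ≤ fs.length) :
    E (bulletX fs) = ∑ i ∈ Finset.range fs.length, bulletX (fs.set i (E (fs.getD i 0))) := by
  apply Subtype.ext
  rw [hE.leibniz fs hfs, Submodule.coe_sum]
  exact Finset.sum_congr rfl fun i _ => by rw [coe_bulletX, List.map_set]

lemma substHomX_comp {g : Kx K} {φ E : Kx K → Kx K}
    (hE : IsContDerivAlong (·.1) fun f => (E f).1) (hφ : IsSubstHomX g φ) :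
    IsContDerivAlong (fun f => (φ f).1) (fun f => (φ (E f)).1) where
  linear := by
    have hElin : IsLinearMap K E :=
      ⟨fun f g => Subtype.ext (hE.linear.map_add f g),
        fun c f => Subtype.ext (hE.linear.map_smul c f)⟩
    exact ⟨fun f g => by rw [hElin.map_add, hφ.linear.map_add]; rfl,
      fun c f => by rw [hElin.map_smul, hφ.linear.map_smul]; rfl⟩
  cont := hφ.cont.comp (dβ := distKx) hE.cont
  leibniz fs hfs := by
    rw [hE.bulletX_leibniz fs hfs, hφ.linear.map_sum, Submodule.coe_sum]
    refine Finset.sum_congr rfl fun i _ => ?_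
    rw [hφ.map_graft _ (by simpa), coe_bulletX, List.map_set, List.map_set,
      List.map_map]
    rfl

end IsContDerivAlong

lemma IsUDeriv.isContDerivAlong_substHom_comp {d : Kx K → PSer K} (hd : IsUDeriv d)
    {h : PSer K} {ψ : PSer K → PSer K} (hψ : IsSubstHom Xps h ψ) :
    IsContDerivAlong (·.1) fun f => ψ (d f) := by
  simpa only [hψ.map_coe] using hd.isContDerivAlong.substHom_comp hψ

end Planar

open Planar in
theorem planar_special_chain_rule_general (K : Type) [Field K]
    (g : Kx K)
    (φg : Kx K → Kx K) (hφg : IsSubstHomX g φg)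
    (d : Kx K → PSer K) (hd : IsUDeriv d)
    (ψ1 ψx ψ1x : PSer K → PSer K)
    (hψ1 : IsSubstHom Xps onePS ψ1)
    (hψx : IsSubstHom Xps Xps ψx)
    (hψ1x : IsSubstHom Xps (onePS + Xps) ψ1x)
    (D T T1 : Kx K → Kx K)
    (hD : ∀ f : Kx K, (D f).1 = ψ1 (d f))
    (hT : ∀ f : Kx K, (T f).1 = ψx (d f))
    (hT1 : ∀ f : Kx K, (T1 f).1 = ψ1x (d f))
    (hg' : D g = oneX + g) :
    ∀ f : Kx K, D (φg f) = φg (D f) + φg (T f) ∧ D (φg f) = φg (T1 f) := by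
  have hDderiv : IsContDerivAlong (·.1) fun f => (D f).1 := by
    simpa only [hD] using hd.isContDerivAlong_substHom_comp hψ1
  have hTderiv : IsContDerivAlong (·.1) fun f => (T f).1 := by
    simpa only [hT] using hd.isContDerivAlong_substHom_comp hψx
  have hT1deriv : IsContDerivAlong (·.1) fun f => (T1 f).1 := by
    simpa only [hT1] using hd.isContDerivAlong_substHom_comp hψ1x
  have hT1x : T1 xX = oneX + xX := Subtype.ext (by rw [hT1, hd.map_X, hψ1x.map_Y]; rfl)
  have hsplit : ∀ f, T1 f = D f + T f := by
    have hx : (T1 xX).1 = (D xX).1 + (T xX).1 := by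
      rw [hT1x, hD, hT, hd.map_X, hψ1.map_Y, hψx.map_Y]
      rfl
    exact fun f => Subtype.ext (congrFun (hT1deriv.ext (hDderiv.add hTderiv) rfl hx) f)
  have hchain : ∀ f, D (φg f) = φg (T1 f) := by
    have hone : (φg oneX).1 = onePS := by rw [hφg.map_one]; rfl
    have hx : (D (φg xX)).1 = (φg (T1 xX)).1 := by
      rw [hφg.map_X, hg', hT1x, hφg.linear.map_add, hφg.map_one, hφg.map_X]
    exact fun f => Subtype.ext (congrFun
      ((hDderiv.comp_substHomX hφg).ext (hT1deriv.substHomX_comp hφg) hone hx) f)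
  intro f
  exact ⟨by rw [hchain, hsplit, hφg.linear.map_add], hchain f⟩

open Planar in
/-- Special chain rule: let `g ∈ K{{x}}`, `ord_x(g) ≥ 1`, with
`g' = 1 + g`. Then for every `f ∈ K{{x}}`,
`(d/dx)(f(g(x))) = f'(g(x)) + ((x d/dx)(f))(g(x)) = (((1+x) d/dx)(f))(g(x))`.
Here `D = d/dx = φ_{(x,1)} ∘ d`, `T = (x d/dx) = φ_{(x,x)} ∘ d`,
`T1 = ((1+x) d/dx) = φ_{(x,1+x)} ∘ d`, and `φg = φ_g` is substitution of `g`. -/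
theorem planar_special_chain_rule (K : Type) [Field K]
    (g : Kx K) (hg : 1 ≤ ordx g.1)
    (φg : Kx K → Kx K) (hφg : IsSubstHomX g φg)
    (d : Kx K → PSer K) (hd : IsUDeriv d)
    (ψ1 ψx ψ1x : PSer K → PSer K)
    (hψ1 : IsSubstHom Xps onePS ψ1)
    (hψx : IsSubstHom Xps Xps ψx)
    (hψ1x : IsSubstHom Xps (onePS + Xps) ψ1x)
    (D T T1 : Kx K → Kx K)
    (hD : ∀ f : Kx K, (D f).1 = ψ1 (d f))
    (hT : ∀ f : Kx K, (T f).1 = ψx (d f))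
    (hT1 : ∀ f : Kx K, (T1 f).1 = ψ1x (d f))
    (hg' : D g = oneX + g) :
    ∀ f : Kx K, D (φg f) = φg (D f) + φg (T f) ∧ D (φg f) = φg (T1 f) :=
  planar_special_chain_rule_general K g φg hφg d hd ψ1 ψx ψ1x hψ1 hψx hψ1x D T T1 hD hT hT1 hg'
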